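/- arXiv:2008.07765 — 2 statements merged into one kernel-verified Lean document; each statement's English description precedes it below -/
import Mathlib

section
/- For the n=3 rational Calogero–Moser system, the 3×3 matrices L (with L_{rr} = p_r(t), L_{rs} = ik/(q_r(t)−q_s(t)) for r≠s) and M (with M_{rs} = −ik/(q_r−q_s)² for r≠s and M_{rr} = Σ_{t≠r} ik/(q_r−q_t)²) satisfy the Lax equation dL/dt = LM − ML, provided (q(t), p(t)) satisfies Hamilton's equations q̇_r = p_r, ṗ_r = Σ_{s≠r} 2k²(q_r−q_s)^{-3}. -/
open scoped BigOperators

/-- The Lax matrix `L` of the `n = 3` rational Calogero–Moser system: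
`L_{rr} = p_r`, `L_{rs} = ik/(q_r − q_s)` for `r ≠ s`. -/
noncomputable def cmLax (k : ℝ) (q p : Fin 3 → ℝ) : Matrix (Fin 3) (Fin 3) ℂ :=
  Matrix.of fun r s =>
    if r = s then (p r : ℂ) else Complex.I * (k : ℂ) / ((q r : ℂ) - (q s : ℂ))

/-- The matrix `M`: `M_{rs} = −ik/(q_r−q_s)²` for `r ≠ s`,
`M_{rr} = Σ_{t≠r} ik/(q_r−q_t)²`. -/
noncomputable def cmLaxM (k : ℝ) (q : Fin 3 → ℝ) : Matrix (Fin 3) (Fin 3) ℂ :=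
  Matrix.of fun r s =>
    if r = s then
      ∑ t ∈ Finset.univ.filter (fun t => t ≠ r),
        Complex.I * (k : ℂ) / ((q r : ℂ) - (q t : ℂ))^2
    else -(Complex.I * (k : ℂ)) / ((q r : ℂ) - (q s : ℂ))^2

/-!
Off the diagonal, differentiating `ik/(q_r − q_s)` gives `(q̇_r − q̇_s) M_rs`, while
`[L, M]_rs = (p_r − p_s) M_rs`: with `u` the third index, the `k²` terms cancel by the
partial-fraction identity `1/(x y²) − 1/(x² y) = 1/((x+y) y²) − 1/((x+y) x²)` for
`x = q_r − q_u`, `y = q_u − q_s`. On the diagonal the `s = r` summand of `[L, M]_rr` vanishes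
and each other summand `L_rs M_sr − M_rs L_sr` equals `2k²/(q_r − q_s)³`, so `[L, M]_rr = ṗ_r`.
-/

open Complex Finset

lemma exists_fin_three_ne_and_ne (r s : Fin 3) : ∃ u, u ≠ r ∧ u ≠ s := by
  revert r s; decide

lemma Fin.sum_univ_three_of_ne {M : Type*} [AddCommMonoid M] (f : Fin 3 → M) {r s u : Fin 3}
    (hrs : r ≠ s) (hru : r ≠ u) (hsu : s ≠ u) :
    ∑ i, f i = f r + f s + f u := by
  rw [show (univ : Finset (Fin 3)) = {r, s, u} by revert r s u; decide,
    sum_insert (by simp [hrs, hru]), sum_pair hsu, add_assoc]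

lemma cmLaxM_apply_self_of_ne (k : ℝ) (q : Fin 3 → ℝ) {r s u : Fin 3}
    (hrs : r ≠ s) (hru : r ≠ u) (hsu : s ≠ u) :
    cmLaxM k q r r = I * k / ((q r : ℂ) - q s) ^ 2 + I * k / ((q r : ℂ) - q u) ^ 2 := by
  rw [cmLaxM, Matrix.of_apply, if_pos rfl,
    show univ.filter (· ≠ r) = {s, u} by revert r s u; decide, sum_pair hsu]

lemma cmLax_commutator_summand_of_ne (k : ℝ) (q p : Fin 3 → ℝ) {r s : Fin 3}
    (hq : q r ≠ q s) :
    cmLax k q p r s * cmLaxM k q s r - cmLaxM k q r s * cmLax k q p s r =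
      ((2 * k ^ 2 * ((q r - q s) ^ 3)⁻¹ : ℝ) : ℂ) := by
  have hrs : r ≠ s := ne_of_apply_ne q hq
  have hx : (q r : ℂ) - q s ≠ 0 := sub_ne_zero.2 (ofReal_injective.ne hq)
  have hx' : (q s : ℂ) - q r ≠ 0 := sub_ne_zero.2 (ofReal_injective.ne hq.symm)
  simp only [cmLax, cmLaxM, Matrix.of_apply, if_neg hrs, if_neg hrs.symm]
  push_cast
  field_simp
  ring_nf
  rw [I_sq]
  ring

lemma cmLax_commutator_apply_self (k : ℝ) (q p : Fin 3 → ℝ) (hq : Function.Injective q)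
    (r : Fin 3) :
    (cmLax k q p * cmLaxM k q - cmLaxM k q * cmLax k q p) r r =
      ((∑ s ∈ univ.filter (fun s => s ≠ r), 2 * k ^ 2 * ((q r - q s) ^ 3)⁻¹ : ℝ) : ℂ) := by
  rw [Matrix.sub_apply, Matrix.mul_apply, Matrix.mul_apply, ← sum_sub_distrib,
    ← sum_filter_of_ne (p := fun s => s ≠ r), ofReal_sum]
  · refine sum_congr rfl fun s hs => ?_
    have hsr : s ≠ r := (mem_filter.1 hs).2
    exact cmLax_commutator_summand_of_ne k q p (hq.ne hsr.symm)
  · intro s _ h hsr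
    simp [hsr, mul_comm] at h

lemma cmLax_commutator_apply_of_ne (k : ℝ) (q p : Fin 3 → ℝ) (hq : Function.Injective q)
    {r s : Fin 3} (hrs : r ≠ s) :
    (cmLax k q p * cmLaxM k q - cmLaxM k q * cmLax k q p) r s =
      ((p r : ℂ) - p s) * cmLaxM k q r s := by
  obtain ⟨u, hur, hus⟩ := exists_fin_three_ne_and_ne r s
  have hx : ∀ {a b}, a ≠ b → (q a : ℂ) - q b ≠ 0 := fun h =>
    sub_ne_zero.2 (ofReal_injective.ne (hq.ne h))
  have := hx hrs; have := hx hrs.symm; have := hx hur; have := hx hur.symm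
  have := hx hus; have := hx hus.symm
  rw [Matrix.sub_apply, Matrix.mul_apply, Matrix.mul_apply,
    Fin.sum_univ_three_of_ne _ hrs hur.symm hus.symm,
    Fin.sum_univ_three_of_ne _ hrs hur.symm hus.symm,
    cmLaxM_apply_self_of_ne k q hrs hur.symm hus.symm,
    cmLaxM_apply_self_of_ne k q hrs.symm hus.symm hur.symm]
  simp only [cmLax, cmLaxM, Matrix.of_apply, if_pos, if_neg hrs, if_neg hur.symm, if_neg hus]
  field_simp
  ring

lemma hasDerivAt_cmLax_apply_self (k : ℝ) {q p : ℝ → Fin 3 → ℝ} {r : Fin 3} {p' t : ℝ}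
    (hp : HasDerivAt (fun u => p u r) p' t) :
    HasDerivAt (fun u => cmLax k (q u) (p u) r r) p' t := by
  simpa [cmLax] using hp.ofReal_comp

lemma hasDerivAt_cmLax_apply_of_ne (k : ℝ) {q p : ℝ → Fin 3 → ℝ} {r s : Fin 3} {vr vs t : ℝ}
    (hqt : q t r ≠ q t s) (hr : HasDerivAt (fun u => q u r) vr t)
    (hs : HasDerivAt (fun u => q u s) vs t) :
    HasDerivAt (fun u => cmLax k (q u) (p u) r s) (((vr : ℂ) - vs) * cmLaxM k (q t) r s) t := by
  have hrs : r ≠ s := ne_of_apply_ne (q t) hqt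
  have hx : (q t r : ℂ) - q t s ≠ 0 := sub_ne_zero.2 (ofReal_injective.ne hqt)
  have hL : (fun u => cmLax k (q u) (p u) r s) = fun u => I * k / ((q u r : ℂ) - q u s) := by
    ext u
    simp [cmLax, hrs]
  rw [hL]
  refine ((hasDerivAt_const t (I * k)).fun_div
    (hr.ofReal_comp.fun_sub hs.ofReal_comp) hx).congr_deriv ?_
  simp only [cmLaxM, Matrix.of_apply, if_neg hrs]
  ring

/-- If `(q(t), p(t))` satisfies Hamilton's equations of the `n = 3` rational
Calogero–Moser system, then `L, M` satisfy the Lax equation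
`dL/dt = LM − ML` (entrywise derivatives). -/
theorem cm3_lax_equation (k : ℝ) (q p : ℝ → Fin 3 → ℝ)
    (hdist : ∀ t : ℝ, ∀ r s : Fin 3, r ≠ s → q t r ≠ q t s)
    (hq : ∀ t : ℝ, ∀ r : Fin 3, HasDerivAt (fun u => q u r) (p t r) t)
    (hp : ∀ t : ℝ, ∀ r : Fin 3, HasDerivAt (fun u => p u r)
      (∑ s ∈ Finset.univ.filter (fun s => s ≠ r),
        2 * k^2 * ((q t r - q t s)^3)⁻¹) t) :
    ∀ t : ℝ, ∀ i j : Fin 3,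
      HasDerivAt (fun u => cmLax k (q u) (p u) i j)
        ((cmLax k (q t) (p t) * cmLaxM k (q t)
          - cmLaxM k (q t) * cmLax k (q t) (p t)) i j) t := by
  intro t i j
  have hinj : Function.Injective (q t) := fun r s h => not_imp_not.1 (hdist t r s) h
  rcases eq_or_ne i j with rfl | hij
  · rw [cmLax_commutator_apply_self k (q t) (p t) hinj]
    exact hasDerivAt_cmLax_apply_self k (hp t i)
  · rw [cmLax_commutator_apply_of_ne k (q t) (p t) hinj hij]
    exact hasDerivAt_cmLax_apply_of_ne k (hdist t i j hij) (hq t i) (hq t j)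
end

section
/- The classical Dunkl operators Poisson commute: for any a, b ∈ R^n, {D^cl_a, D^cl_b} = 0, where D^cl_a(x,p) = ⟨p,a⟩ − Σ_{α∈R₊} c_α⟨α,a⟩/⟨α,x⟩·(1−σ_α) and the Poisson bracket is taken with respect to the canonical coordinates (x,p) (treating the group-algebra coefficients (1−σ_α) as constants). -/
/-!
Each `D^cl_a` is affine in the momentum with the scalar slope `⟨·, a⟩ • 1`, so the bracket
collapses to `∂_a D^cl_b − ∂_b D^cl_a`, with derivatives in the position variables. Both terms equal
`Σ_α c_α ⟨α, a⟩ ⟨α, b⟩ / ⟨α, x⟩² • (1 − σ_α)`, which is symmetric in `a` and `b`.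
-/

open scoped RealInnerProductSpace BigOperators

/-- The classical rational Dunkl operator
`D^cl_a (x,p) = ⟨p,a⟩·1 − Σ_{α∈R₊} c_α⟨α,a⟩/⟨α,x⟩ · (1−σ_α)`,
a function on phase space with values in the group algebra `A` of the
reflection group; `s α` stands for the (constant) group-algebra element
`1 − σ_α`. -/
noncomputable def classicalDunkl {n : ℕ} {A : Type*} [NormedRing A]
    [NormedAlgebra ℝ A]
    (Rp : Finset (EuclideanSpace ℝ (Fin n)))
    (c : EuclideanSpace ℝ (Fin n) → ℝ)
    (s : EuclideanSpace ℝ (Fin n) → A)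
    (a : EuclideanSpace ℝ (Fin n))
    (z : EuclideanSpace ℝ (Fin n) × EuclideanSpace ℝ (Fin n)) : A :=
  (⟪z.2, a⟫ : ℝ) • (1 : A)
    - ∑ α ∈ Rp, ((c α * ⟪α, a⟫) / ⟪α, z.1⟫) • s α

/-- Poisson bracket of `A`-valued functions on phase space `ℝⁿ × ℝⁿ`
(first component `x`, second component `p`):
`{f,g} = Σ_i (∂f/∂p_i ∂g/∂x_i − ∂f/∂x_i ∂g/∂p_i)`. -/
noncomputable def poissonA {n : ℕ} {A : Type*} [NormedRing A]
    [NormedAlgebra ℝ A]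
    (f g : EuclideanSpace ℝ (Fin n) × EuclideanSpace ℝ (Fin n) → A)
    (z : EuclideanSpace ℝ (Fin n) × EuclideanSpace ℝ (Fin n)) : A :=
  ∑ i : Fin n,
    (fderiv ℝ f z (0, EuclideanSpace.single i (1:ℝ))
        * fderiv ℝ g z (EuclideanSpace.single i (1:ℝ), 0)
      - fderiv ℝ f z (EuclideanSpace.single i (1:ℝ), 0)
        * fderiv ℝ g z (0, EuclideanSpace.single i (1:ℝ)))

theorem EuclideanSpace.sum_smul_apply_single {ι 𝕜 M : Type*} [Fintype ι] [DecidableEq ι]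
    [RCLike 𝕜] [AddCommGroup M] [Module 𝕜 M] (L : EuclideanSpace 𝕜 ι →ₗ[𝕜] M)
    (a : EuclideanSpace 𝕜 ι) :
    ∑ i, a i • L (EuclideanSpace.single i 1) = L a := by
  conv_rhs => rw [← (EuclideanSpace.basisFun ι 𝕜).sum_repr a]
  simp

theorem poissonA_eq_sub_of_fderiv_momentum {n : ℕ} {A : Type*} [NormedRing A] [NormedAlgebra ℝ A]
    {f g : EuclideanSpace ℝ (Fin n) × EuclideanSpace ℝ (Fin n) → A}
    {a b : EuclideanSpace ℝ (Fin n)} {z : EuclideanSpace ℝ (Fin n) × EuclideanSpace ℝ (Fin n)}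
    (hf : ∀ v, fderiv ℝ f z (0, v) = ⟪v, a⟫ • 1) (hg : ∀ v, fderiv ℝ g z (0, v) = ⟪v, b⟫ • 1) :
    poissonA f g z = fderiv ℝ g z (a, 0) - fderiv ℝ f z (b, 0) := by
  have hsum (L : EuclideanSpace ℝ (Fin n) × EuclideanSpace ℝ (Fin n) →L[ℝ] A) (u) :
      ∑ i, u i • L (EuclideanSpace.single i 1, 0) = L (u, 0) :=
    EuclideanSpace.sum_smul_apply_single (L.toLinearMap ∘ₗ LinearMap.inl ℝ _ _) u
  simp only [poissonA, hf, hg, EuclideanSpace.inner_single_left, smul_one_mul, mul_smul_one,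
    map_one, one_mul, Finset.sum_sub_distrib, hsum]

theorem hasFDerivAt_const_div_inner {E : Type*} [NormedAddCommGroup E] [InnerProductSpace ℝ E]
    (k : ℝ) {α x : E} (hx : ⟪α, x⟫ ≠ 0) :
    HasFDerivAt (fun y => k / ⟪α, y⟫) (-(k / ⟪α, x⟫ ^ 2) • innerSL ℝ α) x := by
  have := ((hasDerivAt_inv hx).const_mul k).comp_hasFDerivAt x (innerSL ℝ α).hasFDerivAt
  simpa [div_eq_mul_inv, Function.comp_def] using this

section ClassicalDunkl

variable {n : ℕ} {A : Type*} [NormedRing A] [NormedAlgebra ℝ A]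
  (Rp : Finset (EuclideanSpace ℝ (Fin n))) (c : EuclideanSpace ℝ (Fin n) → ℝ)
  (s : EuclideanSpace ℝ (Fin n) → A) (a : EuclideanSpace ℝ (Fin n))
  {z : EuclideanSpace ℝ (Fin n) × EuclideanSpace ℝ (Fin n)}

theorem hasFDerivAt_classicalDunkl (hz : ∀ α ∈ Rp, ⟪α, z.1⟫ ≠ (0:ℝ)) :
    HasFDerivAt (classicalDunkl Rp c s a)
      (((innerSL ℝ a).comp (.snd ℝ _ _)).smulRight 1
        - ∑ α ∈ Rp, ((-(c α * ⟪α, a⟫ / ⟪α, z.1⟫ ^ 2) • innerSL ℝ α).comp (.fst ℝ _ _)).smulRight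
          (s α)) z := by
  refine HasFDerivAt.sub ?_ (.fun_sum fun α hα => ?_)
  · simpa [real_inner_comm] using
      ((innerSL ℝ a).hasFDerivAt.comp z hasFDerivAt_snd).smul_const (1 : A)
  · exact ((hasFDerivAt_const_div_inner _ (hz α hα)).comp z hasFDerivAt_fst).smul_const (s α)

theorem fderiv_classicalDunkl_apply (hz : ∀ α ∈ Rp, ⟪α, z.1⟫ ≠ (0:ℝ))
    (u v : EuclideanSpace ℝ (Fin n)) :
    fderiv ℝ (classicalDunkl Rp c s a) z (u, v)
      = ⟪v, a⟫ • 1 + ∑ α ∈ Rp, (c α * ⟪α, a⟫ * ⟪α, u⟫ / ⟪α, z.1⟫ ^ 2) • s α := by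
  simp [(hasFDerivAt_classicalDunkl Rp c s a hz).fderiv, real_inner_comm, mul_div_right_comm]

end ClassicalDunkl

theorem classicalDunkl_poisson_commute_general {n : ℕ} {A : Type*} [NormedRing A]
    [NormedAlgebra ℝ A]
    (Rp : Finset (EuclideanSpace ℝ (Fin n)))
    (c : EuclideanSpace ℝ (Fin n) → ℝ)
    (s : EuclideanSpace ℝ (Fin n) → A)
    (a b : EuclideanSpace ℝ (Fin n))
    (z : EuclideanSpace ℝ (Fin n) × EuclideanSpace ℝ (Fin n))
    (hz : ∀ α ∈ Rp, ⟪α, z.1⟫ ≠ (0:ℝ)) :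
    poissonA (classicalDunkl Rp c s a) (classicalDunkl Rp c s b) z = 0 := by
  have hmomentum (d v : EuclideanSpace ℝ (Fin n)) :
      fderiv ℝ (classicalDunkl Rp c s d) z (0, v) = ⟪v, d⟫ • 1 := by
    simp [fderiv_classicalDunkl_apply _ _ _ _ hz]
  rw [poissonA_eq_sub_of_fderiv_momentum (hmomentum a) (hmomentum b),
    fderiv_classicalDunkl_apply _ _ _ _ hz, fderiv_classicalDunkl_apply _ _ _ _ hz]
  simp [mul_right_comm]

/-- The classical Dunkl operators Poisson commute: `{D^cl_a, D^cl_b} = 0`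
at every point of `T*(V_reg)`. -/
theorem classicalDunkl_poisson_commute {n : ℕ} {A : Type*} [NormedRing A]
    [NormedAlgebra ℝ A]
    (Rp : Finset (EuclideanSpace ℝ (Fin n)))
    (c : EuclideanSpace ℝ (Fin n) → ℝ)
    (s : EuclideanSpace ℝ (Fin n) → A)
    (hR0 : ∀ α ∈ Rp, α ≠ 0)
    (a b : EuclideanSpace ℝ (Fin n))
    (z : EuclideanSpace ℝ (Fin n) × EuclideanSpace ℝ (Fin n))
    (hz : ∀ α ∈ Rp, ⟪α, z.1⟫ ≠ (0:ℝ)) :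
    poissonA (classicalDunkl Rp c s a) (classicalDunkl Rp c s b) z = 0 :=
  classicalDunkl_poisson_commute_general Rp c s a b z hz
end
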